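/- Let p be a prime, k ≥ 1, Δ a finite abelian group, and ψ : Δ → (ℤ/p^kℤ)ˣ a group homomorphism whose composition with the reduction map (ℤ/p^kℤ)ˣ → (ℤ/pℤ)ˣ is a nontrivial character of Δ. Then H¹(Δ, (ℤ/p^kℤ)(ψ)) = 0. -/

import Mathlib

/-
For a commutative group, the cocycle relation evaluated on `g * g₀ = g₀ * g` gives
`(ψ g₀ - 1) • f g = (ψ g - 1) • f g₀`. If `ψ g₀ ≢ 1 mod p` then `ψ g₀ - 1` is a unit of the local
ring `ℤ/p^kℤ`, so every cocycle `f` is the coboundary of `(ψ g₀ - 1)⁻¹ • f g₀`.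
-/

/-- The representation of `Δ` on `ℤ/mℤ` where `g` acts as multiplication by `ψ g`. -/
noncomputable def charRep (m : ℕ) {Δ : Type} [Group Δ] (ψ : Δ →* (ZMod m)ˣ) : Rep ℤ Δ :=
  Rep.of ((Module.toModuleEnd ℤ (ZMod m)).toMonoidHom.comp ((Units.coeHom (ZMod m)).comp ψ))

open groupCohomology

universe u

theorem ZMod.isUnit_of_castHom_ne_zero {p k : ℕ} (hp : p.Prime) (hk : k ≠ 0) {x : ZMod (p ^ k)}
    (hx : ZMod.castHom (dvd_pow_self p hk) (ZMod p) x ≠ 0) : IsUnit x := by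
  have : NeZero (p ^ k) := ⟨pow_ne_zero _ hp.ne_zero⟩
  rw [← ZMod.natCast_zmod_val x, ZMod.isUnit_natCast_iff_not_dvd_pow hp (Nat.pos_of_ne_zero hk),
    ← ZMod.natCast_eq_zero_iff]
  rwa [ZMod.castHom_apply, ← ZMod.natCast_val] at hx

theorem groupCohomology.cocycles₁_ρ_sub_comm {k G : Type u} [CommRing k] [CommGroup G]
    {A : Rep k G} (f : cocycles₁ A) (g h : G) :
    A.ρ g (f h) - f h = A.ρ h (f g) - f g := by
  have hc := (mem_cocycles₁_iff f.1).1 f.2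
  have := hc h g
  rw [mul_comm, hc g h] at this
  exact sub_eq_sub_iff_add_eq_add.2 this

theorem groupCohomology.subsingleton_H1_of_bijective_ρ_sub {k G : Type u} [CommRing k]
    [CommGroup G] {A : Rep k G} (g₀ : G) (hg₀ : Function.Bijective fun a => A.ρ g₀ a - a) :
    Subsingleton (H1 A) := by
  refine subsingleton_of_forall_eq 0 fun x => H1_induction_on x fun f => ?_
  obtain ⟨a, ha⟩ := hg₀.2 (f g₀)
  refine (H1π_eq_zero_iff f).2 ⟨a, funext fun g => hg₀.1 ?_⟩
  have hcomm : A.ρ g₀ (A.ρ g a) = A.ρ g (A.ρ g₀ a) := by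
    rw [← Module.End.mul_apply, ← map_mul, mul_comm, map_mul, Module.End.mul_apply]
  simp only [d₀₁_hom_apply, map_sub] at ha ⊢
  rw [hcomm, cocycles₁_ρ_sub_comm f g₀ g, ← ha, map_sub]
  abel

theorem charRep_bijective_ρ_sub (m : ℕ) {Δ : Type} [Group Δ] (ψ : Δ →* (ZMod m)ˣ) {g : Δ}
    (hg : IsUnit ((ψ g : ZMod m) - 1)) :
    Function.Bijective fun x => (charRep m ψ).ρ g x - x := by
  obtain ⟨u, hu⟩ := hg
  have h : (fun x => (charRep m ψ).ρ g x - x) = fun x : ZMod m => (u : ZMod m) * x :=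
    funext fun x : ZMod m => by change (ψ g : ZMod m) * x - x = _; rw [hu, sub_one_mul]
  exact h ▸ u.mulLeft_bijective

theorem stmt_14 (p : ℕ) (hp : p.Prime) (k : ℕ) (hk : 1 ≤ k)
    {Δ : Type} [CommGroup Δ] (ψ : Δ →* (ZMod (p ^ k))ˣ)
    (hψ : (Units.map (ZMod.castHom (dvd_pow_self p (by omega : k ≠ 0)) (ZMod p)).toMonoidHom).comp
      ψ ≠ 1) :
    Subsingleton (groupCohomology.H1 (charRep (p ^ k) ψ)) := by
  obtain ⟨g₀, hg₀⟩ : ∃ g : Δ,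
      ZMod.castHom (dvd_pow_self p (by omega : k ≠ 0)) (ZMod p) (ψ g : ZMod (p ^ k)) ≠ 1 := by
    by_contra! h
    exact hψ (MonoidHom.ext fun g => Units.ext (h g))
  have hunit : IsUnit ((ψ g₀ : ZMod (p ^ k)) - 1) :=
    ZMod.isUnit_of_castHom_ne_zero hp (by omega) (by rwa [map_sub, map_one, sub_ne_zero])
  exact subsingleton_H1_of_bijective_ρ_sub g₀ (charRep_bijective_ρ_sub _ ψ hunit)
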